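/- Let F = cone({1} × (2·co(γ₃ ∪ γ₄) + c)) ⊆ ℝ⁴ with c = (1/2, 0, 1/2), γ₃(t) = (−sin t, 1 − cos t, 0), γ₄(t) = (cos t − 1, sin t, 0), t ∈ [0, π/4]. Then the orthogonal complement of span F in ℝ⁴ equals span{(1, 0, 0, −2)}. -/

import Mathlib

open Real Pointwise RealInnerProductSpace

/-- The conic hull: all nonnegative multiples of elements of `S`. -/
def coneHull {E : Type*} [AddCommMonoid E] [Module ℝ E] (S : Set E) : Set E :=
  {y | ∃ c : ℝ, 0 ≤ c ∧ ∃ x ∈ S, y = c • x}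

noncomputable def vec3 (a b c : ℝ) : EuclideanSpace ℝ (Fin 3) :=
  (WithLp.equiv 2 (Fin 3 → ℝ)).symm ![a, b, c]

noncomputable def vec4 (a b c d : ℝ) : EuclideanSpace ℝ (Fin 4) :=
  (WithLp.equiv 2 (Fin 4 → ℝ)).symm ![a, b, c, d]

/-- The point `(1, x) ∈ ℝ⁴` for `x ∈ ℝ³`. -/
noncomputable def liftPt (x : EuclideanSpace ℝ (Fin 3)) : EuclideanSpace ℝ (Fin 4) :=
  (WithLp.equiv 2 (Fin 4 → ℝ)).symm (Fin.cons 1 x)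

noncomputable def γ₁ (t : ℝ) : EuclideanSpace ℝ (Fin 3) := vec3 0 (-sin t) (cos t - 1)
noncomputable def γ₂ (t : ℝ) : EuclideanSpace ℝ (Fin 3) := vec3 0 (cos t - 1) (-sin t)
noncomputable def γ₃ (t : ℝ) : EuclideanSpace ℝ (Fin 3) := vec3 (-sin t) (1 - cos t) 0
noncomputable def γ₄ (t : ℝ) : EuclideanSpace ℝ (Fin 3) := vec3 (cos t - 1) (sin t) 0

/-- The translation vector `c = (1/2, 0, 1/2)`. -/
noncomputable def cvec : EuclideanSpace ℝ (Fin 3) := vec3 (1 / 2) 0 (1 / 2)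

/-- The face `F = cone({1} × (2 · co(γ₃ ∪ γ₄) + c)) ⊆ ℝ⁴`. -/
noncomputable def Fface : Set (EuclideanSpace ℝ (Fin 4)) :=
  coneHull {z | ∃ x ∈ (fun w => (2 : ℝ) • w + cvec) ''
    convexHull ℝ (γ₃ '' Set.Icc (0 : ℝ) (π / 4) ∪ γ₄ '' Set.Icc (0 : ℝ) (π / 4)),
    z = liftPt x}

/-- The set `C' = 2 · co(γ₁ ∪ γ₂ ∪ γ₃ ∪ γ₄) + c ⊆ ℝ³`. -/
noncomputable def C' : Set (EuclideanSpace ℝ (Fin 3)) :=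
  (fun w => (2 : ℝ) • w + cvec) ''
    convexHull ℝ (γ₁ '' Set.Icc (0 : ℝ) (π / 4) ∪ γ₂ '' Set.Icc (0 : ℝ) (π / 4) ∪
      γ₃ '' Set.Icc (0 : ℝ) (π / 4) ∪ γ₄ '' Set.Icc (0 : ℝ) (π / 4))

/-- The cone `K = cone({1} × C') ⊆ ℝ⁴`. -/
noncomputable def Kcone : Set (EuclideanSpace ℝ (Fin 4)) :=
  coneHull {z | ∃ x ∈ C', z = liftPt x}

lemma vec3_apply (a b c : ℝ) (i : Fin 3) : vec3 a b c i = ![a, b, c] i := rfl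

lemma inner_vec4_left (a b c d : ℝ) (v : EuclideanSpace ℝ (Fin 4)) :
    ⟪vec4 a b c d, v⟫ = a * v 0 + b * v 1 + c * v 2 + d * v 3 := by
  simp [vec4, PiLp.inner_apply, Fin.sum_univ_four]
  ring

lemma liftPt_two_smul_add_cvec (w : EuclideanSpace ℝ (Fin 3)) :
    liftPt ((2 : ℝ) • w + cvec) = vec4 1 (2 * w 0 + 1 / 2) (2 * w 1) (2 * w 2 + 1 / 2) := by
  ext i
  fin_cases i <;> simp [liftPt, vec4, cvec, vec3] <;> rfl

lemma liftPt_mem_Fface {w : EuclideanSpace ℝ (Fin 3)}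
    (hw : w ∈ convexHull ℝ (γ₃ '' Set.Icc (0 : ℝ) (π / 4) ∪ γ₄ '' Set.Icc (0 : ℝ) (π / 4))) :
    liftPt ((2 : ℝ) • w + cvec) ∈ Fface :=
  ⟨1, zero_le_one, _, ⟨_, ⟨w, hw, rfl⟩, rfl⟩, (one_smul ℝ _).symm⟩

lemma coord_two_eq_zero_of_mem_convexHull {w : EuclideanSpace ℝ (Fin 3)}
    (hw : w ∈ convexHull ℝ (γ₃ '' Set.Icc (0 : ℝ) (π / 4) ∪ γ₄ '' Set.Icc (0 : ℝ) (π / 4))) :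
    w 2 = 0 := by
  refine convexHull_min ?_ (convex_hyperplane
    (EuclideanSpace.proj (2 : Fin 3) : EuclideanSpace ℝ (Fin 3) →L[ℝ] ℝ).isLinear 0) hw
  rintro p (⟨t, -, rfl⟩ | ⟨t, -, rfl⟩) <;> rfl

/-- The arcs `γ₃, γ₄` lie in the plane `x₂ = 0`, so after the translation by `c` every generator
of `F` has last coordinate `1/2`. -/
lemma inner_vec4_of_mem_Fface {x : EuclideanSpace ℝ (Fin 4)} (hx : x ∈ Fface) :
    ⟪vec4 1 0 0 (-2), x⟫ = 0 := by
  obtain ⟨c, -, _, ⟨_, ⟨w, hw, rfl⟩, rfl⟩, rfl⟩ := hx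
  rw [inner_smul_right, liftPt_two_smul_add_cvec, inner_vec4_left]
  simp [vec4, coord_two_eq_zero_of_mem_convexHull hw]

/-- The generators coming from `γ₃ 0`, `γ₃ (π/4)` and `γ₄ (π/4)` already suffice: subtracting the
first equation from the other two leaves a system in `(v₁, v₂)` of determinant `4 - 4√2 ≠ 0`. -/
lemma orthogonal_span_Fface_le :
    (Submodule.span ℝ Fface)ᗮ ≤ Submodule.span ℝ {vec4 1 0 0 (-2)} := by
  intro v hv
  have hπ : (0 : ℝ) ≤ π / 4 := by positivity
  have orth : ∀ t ∈ γ₃ '' Set.Icc (0 : ℝ) (π / 4) ∪ γ₄ '' Set.Icc (0 : ℝ) (π / 4),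
      ⟪liftPt ((2 : ℝ) • t + cvec), v⟫ = 0 := fun t ht =>
    (Submodule.mem_orthogonal _ v).1 hv _
      (Submodule.subset_span (liftPt_mem_Fface (subset_convexHull ℝ _ ht)))
  have e₀ := orth _ (Or.inl ⟨0, ⟨le_rfl, hπ⟩, rfl⟩)
  have e₁ := orth _ (Or.inl ⟨π / 4, ⟨hπ, le_rfl⟩, rfl⟩)
  have e₂ := orth _ (Or.inr ⟨π / 4, ⟨hπ, le_rfl⟩, rfl⟩)
  simp only [liftPt_two_smul_add_cvec, inner_vec4_left, γ₃, γ₄, vec3_apply, sin_zero, cos_zero,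
    sin_pi_div_four, cos_pi_div_four, Matrix.cons_val_zero, Matrix.cons_val_one,
    Matrix.cons_val_two, Matrix.tail_cons, Matrix.head_cons] at e₀ e₁ e₂
  norm_num at e₀ e₁ e₂
  have hs : √2 ^ 2 = 2 := sq_sqrt zero_le_two
  have hs1 : 1 < √2 := one_lt_sqrt_two
  have hv₁ : v 1 = 0 := by nlinarith
  have hv₂ : v 2 = 0 := by nlinarith
  have hv₃ : v 3 = -2 * v 0 := by nlinarith
  refine Submodule.mem_span_singleton.2 ⟨v 0, ?_⟩
  ext i
  fin_cases i <;> simp [vec4, hv₁, hv₂, hv₃, mul_comm]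

theorem stmt_17 :
    (Submodule.span ℝ Fface)ᗮ = Submodule.span ℝ {vec4 1 0 0 (-2)} :=
  le_antisymm orthogonal_span_Fface_le <| Submodule.isOrtho_span.2 fun _ hn _ hx => by
    rw [Set.mem_singleton_iff.1 hn]
    exact inner_vec4_of_mem_Fface hx
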